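/- (k-expert activation, necessity) Let u ∈ ℝ^E with E ≥ 2, let 1 ≤ k ≤ E − 1, and let λ < 1. If the Sparsegen routing output p* = sparsegen(u, λ) satisfies p*_{σ(i)} > 0 for all i ≤ k and p*_{σ(i)} = 0 for all i > k, then 1 − (U_k − k·u_(k+1)) ≤ λ < 1 − (U_k − k·u_(k)). -/

import Mathlib

/-!
Moving mass `t` from a coordinate `a` of the support of `p` to any coordinate `b` changes the
objective by `2t((u_a - (1-λ)p_a) - (u_b - (1-λ)p_b)) + O(t²)`, so at the minimizer the score
`u_i - (1-λ)p_i` takes a common value `τ` on the support and is at most `τ` off it. Summing over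
the `k` support coordinates gives `U_k - (1-λ) = kτ`, and the two inequalities are
`u_(k+1) ≤ τ < u_(k)`, the strict one because `(1-λ)p_(k) > 0`.
-/

noncomputable section

/-- The probability simplex in `ℝ^E`. -/
def simplex (E : ℕ) : Set (EuclideanSpace ℝ (Fin E)) :=
  {p | (∀ i, 0 ≤ p i) ∧ ∑ i, p i = 1}

/-- The Sparsegen objective `g_{u,λ}(p) = ‖p − u‖₂² − λ‖p‖₂²`. -/
def sparsegenObj {E : ℕ} (u : EuclideanSpace ℝ (Fin E)) (lam : ℝ)
    (p : EuclideanSpace ℝ (Fin E)) : ℝ :=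
  ‖p - u‖ ^ 2 - lam * ‖p‖ ^ 2

open Filter Topology in
lemma nonneg_of_forall_mul_add_mul_sq_nonneg {c K ε : ℝ} (hε : 0 < ε)
    (h : ∀ t, 0 < t → t ≤ ε → 0 ≤ c * t + K * t ^ 2) : 0 ≤ c := by
  have hlim : Tendsto (fun t => c + K * t) (𝓝[>] 0) (𝓝 c) := by
    have : Continuous fun t : ℝ => c + K * t := by fun_prop
    simpa using (this.tendsto 0).mono_left nhdsWithin_le_nhds
  refine ge_of_tendsto hlim ?_
  filter_upwards [Ioc_mem_nhdsGT hε] with t ⟨ht0, htε⟩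
  have := h t ht0 htε
  nlinarith

lemma sparsegenObj_add {E : ℕ} (u : EuclideanSpace ℝ (Fin E)) (lam : ℝ)
    (p d : EuclideanSpace ℝ (Fin E)) :
    sparsegenObj u lam (p + d) =
      sparsegenObj u lam p + 2 * inner ℝ d ((1 - lam) • p - u) + (1 - lam) * ‖d‖ ^ 2 := by
  simp only [sparsegenObj, add_sub_right_comm p d u, norm_add_sq_real, inner_sub_right,
    inner_smul_right, real_inner_comm d]
  ring

lemma add_smul_single_sub_single_mem_simplex {E : ℕ} {p : EuclideanSpace ℝ (Fin E)}
    (hp : p ∈ simplex E) (a b : Fin E) {t : ℝ} (ht0 : 0 ≤ t) (hta : t ≤ p a) :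
    p + t • (EuclideanSpace.single b 1 - EuclideanSpace.single a 1) ∈ simplex E := by
  refine ⟨fun i => ?_, ?_⟩
  · simp only [PiLp.add_apply, PiLp.smul_apply, PiLp.sub_apply, PiLp.single_apply,
      smul_eq_mul]
    have := hp.1 i
    split_ifs with hb ha ha <;> subst_vars <;> linarith
  · simp [Finset.sum_add_distrib, ← Finset.mul_sum, Finset.sum_sub_distrib, hp.2]

lemma IsMinOn.sparsegen_stationary {E : ℕ} {u : EuclideanSpace ℝ (Fin E)} {lam : ℝ}
    {p : EuclideanSpace ℝ (Fin E)} (hp : p ∈ simplex E)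
    (hmin : IsMinOn (sparsegenObj u lam) (simplex E) p) {a : Fin E} (hpa : 0 < p a)
    (b : Fin E) :
    u b - (1 - lam) * p b ≤ u a - (1 - lam) * p a := by
  set d := EuclideanSpace.single b (1 : ℝ) - EuclideanSpace.single a 1
  have hgain : 0 ≤ inner ℝ d ((1 - lam) • p - u) := by
    refine nonneg_of_forall_mul_add_mul_sq_nonneg (K := (1 - lam) * ‖d‖ ^ 2 / 2) hpa
      fun t ht0 hta => ?_
    have h : sparsegenObj u lam p ≤ sparsegenObj u lam (p + t • d) :=
      hmin (add_smul_single_sub_single_mem_simplex hp a b ht0.le hta)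
    rw [sparsegenObj_add, real_inner_smul_left, norm_smul, Real.norm_of_nonneg ht0.le] at h
    nlinarith
  simp only [d, inner_sub_left, EuclideanSpace.inner_single_left, conj_trivial, one_mul,
    PiLp.sub_apply, PiLp.smul_apply, smul_eq_mul] at hgain
  linarith

lemma IsMinOn.sparsegen_sum_sub_eq {E : ℕ} {u : EuclideanSpace ℝ (Fin E)} {lam : ℝ}
    {p : EuclideanSpace ℝ (Fin E)} (hp : p ∈ simplex E)
    (hmin : IsMinOn (sparsegenObj u lam) (simplex E) p) {S : Finset (Fin E)}
    (hpos : ∀ i ∈ S, 0 < p i) (hzero : ∀ i ∉ S, p i = 0) {a : Fin E} (ha : a ∈ S) :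
    ∑ i ∈ S, u i - (1 - lam) = S.card * (u a - (1 - lam) * p a) := by
  have hconst : ∀ i ∈ S, u i - (1 - lam) * p i = u a - (1 - lam) * p a := fun i hi =>
    le_antisymm (hmin.sparsegen_stationary hp (hpos a ha) i)
      (hmin.sparsegen_stationary hp (hpos i hi) a)
  have hmass : ∑ i ∈ S, p i = 1 := by
    rw [Finset.sum_subset (Finset.subset_univ S) fun i _ hi => hzero i hi, hp.2]
  rw [← nsmul_eq_mul, ← Finset.sum_const, ← Finset.sum_congr rfl hconst, Finset.sum_sub_distrib,
    ← Finset.mul_sum, hmass, mul_one]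

/-- k-expert activation, necessity: let `u ∈ ℝ^E` with `E ≥ 2`, `1 ≤ k ≤ E − 1`, and
`λ < 1`.  If the Sparsegen routing output `p*` (the unique minimizer over the
simplex) satisfies `p*_{σ(i)} > 0` for all `i ≤ k` and `p*_{σ(i)} = 0` for all
`i > k` (1-based), then `1 − (U_k − k·u_(k+1)) ≤ λ < 1 − (U_k − k·u_(k))`.
(Indices are translated to 0-based `Fin E`: paper's `u_(k)` is `u (σ ⟨k-1,_⟩)` and
`U_k = Σ_{i ≤ k-1} u (σ i)`.) -/
theorem k_expert_activation_necessity (E : ℕ)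
    (u : EuclideanSpace ℝ (Fin E)) (σ : Equiv.Perm (Fin E))
    (k : ℕ) (hk1 : 1 ≤ k) (hk2 : k ≤ E - 1) (lam : ℝ) (hlam : lam < 1)
    (p : EuclideanSpace ℝ (Fin E)) (hp : p ∈ simplex E)
    (hmin : IsMinOn (sparsegenObj u lam) (simplex E) p)
    (hpos : ∀ i : Fin E, (i : ℕ) < k → 0 < p (σ i))
    (hzero : ∀ i : Fin E, k ≤ (i : ℕ) → p (σ i) = 0) :
    1 - ((∑ i ∈ Finset.Iic (⟨k - 1, by omega⟩ : Fin E), u (σ i))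
        - k * u (σ ⟨k, by omega⟩)) ≤ lam ∧
    lam < 1 - ((∑ i ∈ Finset.Iic (⟨k - 1, by omega⟩ : Fin E), u (σ i))
        - k * u (σ ⟨k - 1, by omega⟩)) := by
  generalize ha : (⟨k - 1, by omega⟩ : Fin E) = a
  generalize hb : (⟨k, by omega⟩ : Fin E) = b
  have ha' : (a : ℕ) = k - 1 := by rw [← ha]
  have hmem : ∀ i, i ∈ Finset.Iic a ↔ (i : ℕ) < k := fun i => by
    rw [Finset.mem_Iic, Fin.le_def]
    omega
  have hpa : 0 < p (σ a) := hpos a ((hmem a).1 (Finset.mem_Iic.2 le_rfl))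
  have hthreshold : ∑ i ∈ Finset.Iic a, u (σ i) - (1 - lam) =
      k * (u (σ a) - (1 - lam) * p (σ a)) := by
    have hS : ∀ j, j ∈ (Finset.Iic a).map σ.toEmbedding ↔ (σ.symm j : ℕ) < k := fun j => by
      rw [Finset.mem_map_equiv, hmem]
    have hcard : (Finset.Iic a).card = k := by rw [Fin.card_Iic]; omega
    have := hmin.sparsegen_sum_sub_eq hp
      (fun j hj => by simpa using hpos _ ((hS j).1 hj))
      (fun j hj => by simpa using hzero _ (not_lt.1 ((hS j).not.1 hj)))
      (Finset.mem_map_of_mem σ.toEmbedding (Finset.mem_Iic.2 le_rfl))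
    rwa [Finset.sum_map, Finset.card_map, hcard] at this
  have hb_le : u (σ b) ≤ u (σ a) - (1 - lam) * p (σ a) := by
    simpa [hzero b (by rw [← hb])] using hmin.sparsegen_stationary hp hpa (σ b)
  have hk : (0 : ℝ) < k := by exact_mod_cast hk1
  have hgap : 0 < (1 - lam) * p (σ a) := mul_pos (sub_pos.2 hlam) hpa
  constructor <;> nlinarith
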